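/- arXiv:1409.0893 — 3 statements merged into one kernel-verified Lean document; each statement's English description precedes it below -/
import Mathlib

section
/- For any nontrivial module H of a graph G and any stable set Y of the quotient graph F = f(G,H,h) containing h, and any stable set X of G[H], the set (Y \ {h}) ∪ X is a stable set of G. -/
variable {V : Type*} [Fintype V] [DecidableEq V]

/-- A stable (independent) set. -/
def IsStable (G : SimpleGraph V) (s : Set V) : Prop :=
  ∀ a ∈ s, ∀ b ∈ s, ¬ G.Adj a b

/-- A weighted coloring, given as a multiplicity function on finsets of vertices. -/
def IsWC (G : SimpleGraph V) (w : V → ℕ) (c : Finset V → ℕ) : Prop :=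
  (∀ S : Finset V, c S ≠ 0 → IsStable G (S : Set V)) ∧
  ∀ v : V, w v ≤ ∑ S : Finset V, (if v ∈ S then c S else 0)

/-- The cost of a weighted coloring. -/
def WCcost (c : Finset V → ℕ) : ℕ := ∑ S : Finset V, c S

/-- The weighted chromatic number. -/
noncomputable def chiW (G : SimpleGraph V) (w : V → ℕ) : ℕ :=
  sInf { n : ℕ | ∃ c : Finset V → ℕ, IsWC G w c ∧ n = WCcost c }

/-- A module of a graph. -/
def IsModule (G : SimpleGraph V) (H : Finset V) : Prop :=
  ∀ v ∉ H, (∀ u ∈ H, G.Adj v u) ∨ (∀ u ∈ H, ¬ G.Adj v u)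

def NontrivialModule (G : SimpleGraph V) (H : Finset V) : Prop :=
  IsModule G H ∧ 1 < H.card ∧ H.card < Fintype.card V

/-- The quotient graph f(G,H,h): `none` plays the role of the contracted vertex h. -/
def quotientGraph (G : SimpleGraph V) (H : Finset V) :
    SimpleGraph (Option {v : V // v ∉ H}) where
  Adj x y :=
    match x, y with
    | some a, some b => G.Adj a.1 b.1
    | some a, none => ∃ u ∈ H, G.Adj a.1 u
    | none, some b => ∃ u ∈ H, G.Adj b.1 u
    | none, none => False
  symm := by
    constructor
    rintro (a | a) (b | b) hab
    · exact hab
    · exact hab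
    · exact hab
    · exact hab.symm
  loopless := by
    constructor
    rintro (a | a) hab
    · exact hab
    · exact G.loopless.irrefl _ hab

/-- Weights on the quotient graph: h gets the weighted chromatic number of G[H]. -/
noncomputable def quotientWeights (G : SimpleGraph V) (w : V → ℕ) (H : Finset V) :
    Option {v : V // v ∉ H} → ℕ :=
  fun x => match x with
  | none => chiW (G.induce (H : Set V)) (fun v => w v.1)
  | some a => w a.1

def Prime' (G : SimpleGraph V) : Prop :=
  ∀ H : Finset V, IsModule G H → H.card ≤ 1 ∨ H = Finset.univ

def IsBuoy (G : SimpleGraph V) (S : Fin 5 → Finset V) : Prop :=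
  (∀ i, (S i).Nonempty) ∧
  (∀ v : V, ∃! i, v ∈ S i) ∧
  (∀ i, ∀ a ∈ S i, ∀ b ∈ S (i + 1), G.Adj a b) ∧
  (∀ i, ∀ a ∈ S i, ∀ b ∈ S (i + 2), ¬ G.Adj a b)

theorem quotientGraph_not_adj_of_stable {α : Type*} {G : SimpleGraph α} {H : Finset α}
    {Y : Set (Option {v : α // v ∉ H})} (hY : IsStable (quotientGraph G H) Y) (hhY : none ∈ Y)
    {v : α} (hv : v ∉ H) (hvY : some ⟨v, hv⟩ ∈ Y) {u : α} (hu : u ∈ H) : ¬ G.Adj v u :=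
  fun hvu => hY none hhY (some ⟨v, hv⟩) hvY ⟨u, hu, hvu⟩

theorem merge_stable_general (G : SimpleGraph V) (H : Finset V)
    (Y : Set (Option {v : V // v ∉ H})) (hY : IsStable (quotientGraph G H) Y)
    (hhY : none ∈ Y)
    (X : Set V) (hXH : X ⊆ (H : Set V)) (hX : IsStable G X) :
    IsStable G {v : V | v ∈ X ∨ ∃ hv : v ∉ H, some ⟨v, hv⟩ ∈ Y} := by
  rintro a (haX | ⟨haH, haY⟩) b (hbX | ⟨hbH, hbY⟩) hab
  · exact hX a haX b hbX hab
  · exact quotientGraph_not_adj_of_stable hY hhY hbH hbY (hXH haX) hab.symm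
  · exact quotientGraph_not_adj_of_stable hY hhY haH haY (hXH hbX) hab
  · exact hY _ haY _ hbY hab

/-- if Y is a stable set of the quotient F = f(G,H,h) containing h and X is a
stable set of G[H], then (Y \ {h}) ∪ X is a stable set of G. -/
theorem merge_stable (G : SimpleGraph V) (H : Finset V) (hH : NontrivialModule G H)
    (Y : Set (Option {v : V // v ∉ H})) (hY : IsStable (quotientGraph G H) Y)
    (hhY : none ∈ Y)
    (X : Set V) (hXH : X ⊆ (H : Set V)) (hX : IsStable G X) :
    IsStable G {v : V | v ∈ X ∨ ∃ hv : v ∉ H, some ⟨v, hv⟩ ∈ Y} :=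
  merge_stable_general G H Y hY hhY X hXH hX
end

section
/- If G is a connected (P_5, co-P_5)-free graph on at least 5 vertices that is prime and contains an induced C_5, then G is isomorphic to C_5. -/
/-!
Fix an induced five-cycle `c₀ … c₄` in a (P₅, co-P₅)-free graph. A vertex outside it is complete
to the cycle, anticomplete to it, or sees the cycle exactly as some `cᵢ` does on the other four
vertices; every other trace on the cycle produces an induced P₅ or co-P₅. Calling `Sᵢ` the
vertices of the last kind attached to `cᵢ`, the same two obstructions show that `Sᵢ` is complete
to `Sᵢ₊₁` and anticomplete to `Sᵢ₊₂`, so that `⋃ Sᵢ` and each `Sᵢ` are modules (the `Sᵢ` form a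
buoy). Primality forces `⋃ Sᵢ` to be the whole graph and each `Sᵢ` to be `{cᵢ}`.
-/

variable {V : Type*} [Fintype V] [DecidableEq V]

open Finset SimpleGraph

theorem Prime'.eq_univ_of_mem {W : Type*} [Fintype W] {G : SimpleGraph W} (hG : Prime' G)
    {H : Finset W} (hH : IsModule G H) {a b : W} (ha : a ∈ H) (hb : b ∈ H) (hab : a ≠ b) :
    H = Finset.univ :=
  (hG H hH).resolve_left fun h => hab (Finset.card_le_one.1 h a ha b hb)

namespace SimpleGraph

variable {W X : Type*} {G : SimpleGraph W}

theorem nonempty_embedding_of_adj_iff {H : SimpleGraph X}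
    (hH : ∀ i j, (∀ k, H.Adj i k ↔ H.Adj j k) → i = j) (f : X → W)
    (hf : ∀ i j, G.Adj (f i) (f j) ↔ H.Adj i j) : Nonempty (H ↪g G) :=
  ⟨{ toFun := f
     inj' := fun i j hij => hH i j fun k => by rw [← hf, ← hf, hij]
     map_rel_iff' := hf _ _ }⟩

theorem nonempty_pathGraph_five_embedding {a b c d e : W}
    (hab : G.Adj a b) (hbc : G.Adj b c) (hcd : G.Adj c d) (hde : G.Adj d e)
    (hac : ¬G.Adj a c) (had : ¬G.Adj a d) (hae : ¬G.Adj a e)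
    (hbd : ¬G.Adj b d) (hbe : ¬G.Adj b e) (hce : ¬G.Adj c e) :
    Nonempty (pathGraph 5 ↪g G) :=
  nonempty_embedding_of_adj_iff (by simp only [pathGraph_adj]; decide) ![a, b, c, d, e]
    fun i j => by fin_cases i <;> fin_cases j <;> simp [pathGraph_adj, G.adj_comm, *]

theorem nonempty_compl_pathGraph_five_embedding {a b c d e : W}
    (hab : ¬G.Adj a b) (hbc : ¬G.Adj b c) (hcd : ¬G.Adj c d) (hde : ¬G.Adj d e)
    (hac : G.Adj a c) (had : G.Adj a d) (hae : G.Adj a e)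
    (hbd : G.Adj b d) (hbe : G.Adj b e) (hce : G.Adj c e) :
    Nonempty ((pathGraph 5)ᶜ ↪g G) :=
  nonempty_embedding_of_adj_iff (by simp only [compl_adj, pathGraph_adj]; decide)
    ![a, b, c, d, e]
    fun i j => by fin_cases i <;> fin_cases j <;> simp [pathGraph_adj, G.adj_comm, *]

/-- The last two alternatives are the traces on the five-cycle that, together with the vertex
producing them, induce a P₅, resp. a co-P₅. -/
theorem finset_fin_five_cases (N : Finset (Fin 5)) :
    N = univ ∨ N = ∅ ∨ (∃ i, ∀ k ≠ i, k ∈ N ↔ (cycleGraph 5).Adj i k) ∨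
      (∃ i, i ∈ N ∧ i + 2 ∉ N ∧ i + 3 ∉ N ∧ i + 4 ∉ N) ∨
      (∃ i, i ∈ N ∧ i + 1 ∈ N ∧ i + 3 ∈ N ∧ i + 4 ∉ N) := by
  revert N; decide

def buoyPart (e : cycleGraph 5 ↪g G) (i : Fin 5) : Set W :=
  {v | ∀ k ≠ i, G.Adj v (e k) ↔ G.Adj (e i) (e k)}

section InducedFiveCycle

variable (e : cycleGraph 5 ↪g G) {i j : Fin 5} {u v : W}

theorem self_mem_buoyPart : e i ∈ buoyPart e i := fun _ _ => Iff.rfl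

theorem adj_of_mem_buoyPart (hv : v ∈ buoyPart e i) :
    G.Adj v (e (i + 1)) ∧ G.Adj v (e (i + 4)) ∧ ¬G.Adj v (e (i + 2)) ∧ ¬G.Adj v (e (i + 3)) := by
  simp only [buoyPart, Set.mem_ofPred_eq, e.map_adj_iff] at hv
  refine ⟨(hv _ ?_).2 ?_, (hv _ ?_).2 ?_, (hv _ ?_).not.2 ?_, (hv _ ?_).not.2 ?_⟩ <;>
    simp +decide [cycleGraph_adj]

theorem nonempty_pathGraph_five_of_adj (h0 : G.Adj v (e i)) (h2 : ¬G.Adj v (e (i + 2)))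
    (h3 : ¬G.Adj v (e (i + 3))) (h4 : ¬G.Adj v (e (i + 4))) : Nonempty (pathGraph 5 ↪g G) := by
  apply nonempty_pathGraph_five_embedding (a := e (i + 2)) (b := e (i + 3)) (c := e (i + 4))
    (d := e i) (e := v)
  all_goals simp_all +decide [G.adj_comm, cycleGraph_adj]

theorem nonempty_compl_pathGraph_five_of_not_adj (h0 : G.Adj v (e i)) (h1 : G.Adj v (e (i + 1)))
    (h3 : G.Adj v (e (i + 3))) (h4 : ¬G.Adj v (e (i + 4))) :
    Nonempty ((pathGraph 5)ᶜ ↪g G) := by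
  apply nonempty_compl_pathGraph_five_embedding (a := e i) (b := e (i + 3)) (c := e (i + 1))
    (d := e (i + 4)) (e := v)
  all_goals simp_all +decide [G.adj_comm, cycleGraph_adj]

theorem forall_adj_or_forall_not_adj_or_mem_buoyPart (hP5 : ¬Nonempty (pathGraph 5 ↪g G))
    (hcoP5 : ¬Nonempty ((pathGraph 5)ᶜ ↪g G)) (v : W) :
    (∀ k, G.Adj v (e k)) ∨ (∀ k, ¬G.Adj v (e k)) ∨ ∃ i, v ∈ buoyPart e i := by
  classical
  rcases finset_fin_five_cases (univ.filter fun k => G.Adj v (e k)) with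
    h | h | ⟨i, h⟩ | ⟨i, h⟩ | ⟨i, h⟩ <;>
    simp only [eq_univ_iff_forall, eq_empty_iff_forall_notMem, mem_filter, mem_univ, true_and] at h
  · exact .inl h
  · exact .inr (.inl h)
  · exact .inr (.inr ⟨i, fun k hk => (h k hk).trans e.map_adj_iff.symm⟩)
  · exact (hP5 (nonempty_pathGraph_five_of_adj e h.1 h.2.1 h.2.2.1 h.2.2.2)).elim
  · exact (hcoP5 (nonempty_compl_pathGraph_five_of_not_adj e h.1 h.2.1 h.2.2.1 h.2.2.2)).elim

theorem adj_of_forall_adj_of_mem_buoyPart (hcoP5 : ¬Nonempty ((pathGraph 5)ᶜ ↪g G))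
    (hu : ∀ k, G.Adj u (e k)) (hv : v ∈ buoyPart e i) : G.Adj u v := by
  obtain ⟨v1, v4, v2, -⟩ := adj_of_mem_buoyPart e hv
  by_contra huv
  apply hcoP5
  apply nonempty_compl_pathGraph_five_embedding (a := e (i + 1)) (b := e (i + 4))
    (c := e (i + 2)) (d := v) (e := u)
  all_goals simp_all +decide [G.adj_comm, cycleGraph_adj]

theorem not_adj_of_forall_not_adj_of_mem_buoyPart (hP5 : ¬Nonempty (pathGraph 5 ↪g G))
    (hu : ∀ k, ¬G.Adj u (e k)) (hv : v ∈ buoyPart e i) : ¬G.Adj u v := by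
  obtain ⟨v1, -, v2, v3⟩ := adj_of_mem_buoyPart e hv
  intro huv
  apply hP5
  apply nonempty_pathGraph_five_embedding (a := u) (b := v) (c := e (i + 1)) (d := e (i + 2))
    (e := e (i + 3))
  all_goals simp_all +decide [cycleGraph_adj]

theorem adj_of_mem_buoyPart_of_mem_buoyPart_add_one (hP5 : ¬Nonempty (pathGraph 5 ↪g G))
    (hu : u ∈ buoyPart e i) (hv : v ∈ buoyPart e (i + 1)) : G.Adj u v := by
  obtain ⟨u1, u4, u2, u3⟩ := adj_of_mem_buoyPart e hu
  obtain ⟨v2, v0, v3, v4⟩ := adj_of_mem_buoyPart e hv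
  by_contra huv
  apply hP5
  by_cases hu0 : G.Adj u (e i)
  · apply nonempty_pathGraph_five_embedding (a := e (i + 3)) (b := e (i + 2)) (c := v)
      (d := e i) (e := u)
    all_goals simp_all +decide [G.adj_comm, cycleGraph_adj, add_assoc]
  · apply nonempty_pathGraph_five_embedding (a := e (i + 2)) (b := v) (c := e i)
      (d := e (i + 4)) (e := u)
    all_goals simp_all +decide [G.adj_comm, cycleGraph_adj, add_assoc]

theorem not_adj_of_mem_buoyPart_of_mem_buoyPart_add_two (hcoP5 : ¬Nonempty ((pathGraph 5)ᶜ ↪g G))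
    (hu : u ∈ buoyPart e i) (hv : v ∈ buoyPart e (i + 2)) : ¬G.Adj u v := by
  obtain ⟨u1, u4, u2, u3⟩ := adj_of_mem_buoyPart e hu
  obtain ⟨v3, v1, v4, v0⟩ := adj_of_mem_buoyPart e hv
  intro huv
  apply hcoP5
  by_cases hv2 : G.Adj v (e (i + 2))
  · apply nonempty_compl_pathGraph_five_embedding (a := e (i + 3)) (b := u) (c := e (i + 2))
      (d := e (i + 4)) (e := v)
    all_goals simp_all +decide [G.adj_comm, cycleGraph_adj, add_assoc]
  · apply nonempty_compl_pathGraph_five_embedding (a := e (i + 1)) (b := e (i + 3)) (c := u)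
      (d := e (i + 2)) (e := v)
    all_goals simp_all +decide [G.adj_comm, cycleGraph_adj, add_assoc]

theorem adj_iff_of_mem_buoyPart (hP5 : ¬Nonempty (pathGraph 5 ↪g G))
    (hcoP5 : ¬Nonempty ((pathGraph 5)ᶜ ↪g G)) (hu : u ∈ buoyPart e i) (hv : v ∈ buoyPart e j)
    (hij : i ≠ j) : G.Adj u v ↔ (cycleGraph 5).Adj i j := by
  obtain ⟨d, rfl⟩ : ∃ d, j = i + d := ⟨j - i, by abel⟩
  fin_cases d
  · simp at hij
  · exact iff_of_true (adj_of_mem_buoyPart_of_mem_buoyPart_add_one e hP5 hu hv)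
      (by simp [cycleGraph_adj])
  · exact iff_of_false (not_adj_of_mem_buoyPart_of_mem_buoyPart_add_two e hcoP5 hu hv)
      (by simp +decide [cycleGraph_adj])
  · have hu' : u ∈ buoyPart e (i + 3 + 2) := by simpa [add_assoc] using hu
    exact iff_of_false
      (fun h => not_adj_of_mem_buoyPart_of_mem_buoyPart_add_two e hcoP5 hv hu' h.symm)
      (by simp +decide [cycleGraph_adj])
  · have hu' : u ∈ buoyPart e (i + 4 + 1) := by simpa [add_assoc] using hu
    exact iff_of_true (adj_of_mem_buoyPart_of_mem_buoyPart_add_one e hP5 hv hu').symm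
      (by simp +decide [cycleGraph_adj])

theorem isModule_iUnion_buoyPart (hP5 : ¬Nonempty (pathGraph 5 ↪g G))
    (hcoP5 : ¬Nonempty ((pathGraph 5)ᶜ ↪g G)) [Fintype ↑(⋃ i, buoyPart e i)] :
    IsModule G (⋃ i, buoyPart e i).toFinset := by
  intro x hx
  simp only [Set.mem_toFinset, Set.mem_iUnion, forall_exists_index] at hx ⊢
  rcases forall_adj_or_forall_not_adj_or_mem_buoyPart e hP5 hcoP5 x with hx' | hx' | ⟨i, hi⟩
  · exact .inl fun u i hu => adj_of_forall_adj_of_mem_buoyPart e hcoP5 hx' hu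
  · exact .inr fun u i hu => not_adj_of_forall_not_adj_of_mem_buoyPart e hP5 hx' hu
  · exact (hx ⟨i, hi⟩).elim

theorem isModule_buoyPart (hP5 : ¬Nonempty (pathGraph 5 ↪g G))
    (hcoP5 : ¬Nonempty ((pathGraph 5)ᶜ ↪g G)) (i : Fin 5) [Fintype (buoyPart e i)] :
    IsModule G (buoyPart e i).toFinset := by
  intro x hx
  simp only [Set.mem_toFinset] at hx ⊢
  rcases forall_adj_or_forall_not_adj_or_mem_buoyPart e hP5 hcoP5 x with hx' | hx' | ⟨j, hj⟩
  · exact .inl fun u hu => adj_of_forall_adj_of_mem_buoyPart e hcoP5 hx' hu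
  · exact .inr fun u hu => not_adj_of_forall_not_adj_of_mem_buoyPart e hP5 hx' hu
  · have hji : j ≠ i := by rintro rfl; exact hx hj
    by_cases hadj : (cycleGraph 5).Adj j i
    · exact .inl fun u hu => (adj_iff_of_mem_buoyPart e hP5 hcoP5 hj hu hji).2 hadj
    · exact .inr fun u hu => (adj_iff_of_mem_buoyPart e hP5 hcoP5 hj hu hji).not.2 hadj

end InducedFiveCycle

end SimpleGraph

theorem prime_with_C5_iso_general (G : SimpleGraph V) (hprime : Prime' G)
    (hP5 : ¬ Nonempty (SimpleGraph.pathGraph 5 ↪g G))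
    (hcoP5 : ¬ Nonempty ((SimpleGraph.pathGraph 5)ᶜ ↪g G))
    (hC5 : Nonempty (SimpleGraph.cycleGraph 5 ↪g G)) :
    Nonempty (G ≃g SimpleGraph.cycleGraph 5) := by
  classical
  obtain ⟨e⟩ := hC5
  have hcover : ∀ v, ∃ i, v ∈ buoyPart e i := by
    have h := hprime.eq_univ_of_mem (isModule_iUnion_buoyPart e hP5 hcoP5)
      (a := e 0) (b := e 1) (by simpa using ⟨0, self_mem_buoyPart e⟩)
      (by simpa using ⟨1, self_mem_buoyPart e⟩) (by simp)
    simpa [Finset.eq_univ_iff_forall] using h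
  have hsingleton : ∀ i, ∀ v ∈ buoyPart e i, v = e i := by
    intro i v hv
    by_contra hne
    have h := hprime.eq_univ_of_mem (isModule_buoyPart e hP5 hcoP5 i) (Set.mem_toFinset.2 hv)
      (Set.mem_toFinset.2 (self_mem_buoyPart e)) hne
    have he : e (i + 1) ∈ buoyPart e i := Set.mem_toFinset.1 (h ▸ Finset.mem_univ _)
    exact G.irrefl (adj_of_mem_buoyPart e he).1
  refine ⟨(RelIso.ofSurjective e fun v => ?_).symm⟩
  obtain ⟨i, hi⟩ := hcover v
  exact ⟨i, (hsingleton i v hi).symm⟩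

/-- a connected prime (P₅, co-P₅)-free graph on at least 5 vertices
containing an induced C₅ is isomorphic to C₅. -/
theorem prime_with_C5_iso (G : SimpleGraph V) (hconn : G.Connected)
    (hcard : 5 ≤ Fintype.card V) (hprime : Prime' G)
    (hP5 : ¬ Nonempty (SimpleGraph.pathGraph 5 ↪g G))
    (hcoP5 : ¬ Nonempty ((SimpleGraph.pathGraph 5)ᶜ ↪g G))
    (hC5 : Nonempty (SimpleGraph.cycleGraph 5 ↪g G)) :
    Nonempty (G ≃g SimpleGraph.cycleGraph 5) :=
  prime_with_C5_iso_general G hprime hP5 hcoP5 hC5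
end

section
/- Let H be a nontrivial module of G and F = f(G,H,h) the quotient with w_F(h) = χ_w(G[H]). Then χ_w(F) ≤ χ_w(G). -/
variable {V : Type*} [Fintype V] [DecidableEq V]

/-!
A minimum weighted coloring of `G` is pushed forward along `S ↦ (S \ H) ∪ {h | S meets H}`.
Images of stable sets stay stable because `H` is a module, vertices outside `H` keep their
coverage, and `h` is covered by the total multiplicity of the stable sets meeting `H`; these,
restricted to `H`, form a weighted coloring of `G[H]`, so that multiplicity is at least
`χ_w(G[H]) = w_F(h)`. The total multiplicity is unchanged.
-/

section Pushforward

variable {α W : Type*} [Fintype α] [Fintype W] [DecidableEq W]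

def pushforwardColoring (f : α → Finset W) (c : α → ℕ) (T : Finset W) : ℕ :=
  ∑ a with f a = T, c a

lemma wcCost_pushforwardColoring (f : α → Finset W) (c : α → ℕ) :
    WCcost (pushforwardColoring f c) = ∑ a, c a :=
  Finset.sum_fiberwise _ f c

lemma sum_mem_pushforwardColoring (f : α → Finset W) (c : α → ℕ) (y : W) :
    ∑ T : Finset W, (if y ∈ T then pushforwardColoring f c T else 0)
      = ∑ a, if y ∈ f a then c a else 0 := by
  simp only [pushforwardColoring]
  rw [← Finset.sum_filter, Finset.sum_fiberwise_eq_sum_filter, Finset.sum_filter]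
  simp only [Finset.mem_filter, Finset.mem_univ, true_and]

lemma isWC_pushforwardColoring {G : SimpleGraph W} {w : W → ℕ} {f : α → Finset W} {c : α → ℕ}
    (hstable : ∀ a, c a ≠ 0 → IsStable G (f a))
    (hcover : ∀ y, w y ≤ ∑ a, if y ∈ f a then c a else 0) :
    IsWC G w (pushforwardColoring f c) := by
  refine ⟨fun T hT => ?_, fun y => (sum_mem_pushforwardColoring f c y).symm ▸ hcover y⟩
  obtain ⟨a, ha, hca⟩ := Finset.exists_ne_zero_of_sum_ne_zero hT
  exact (Finset.mem_filter.mp ha).2 ▸ hstable a hca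

lemma chiW_le_of_cover {G : SimpleGraph W} {w : W → ℕ} {f : α → Finset W} {c : α → ℕ}
    (hstable : ∀ a, c a ≠ 0 → IsStable G (f a))
    (hcover : ∀ y, w y ≤ ∑ a, if y ∈ f a then c a else 0) :
    chiW G w ≤ ∑ a, c a :=
  wcCost_pushforwardColoring f c ▸ Nat.sInf_le ⟨_, isWC_pushforwardColoring hstable hcover, rfl⟩

end Pushforward

lemma exists_isWC (G : SimpleGraph V) (w : V → ℕ) : ∃ c, IsWC G w c :=
  ⟨_, isWC_pushforwardColoring (f := fun v => {v}) (c := w)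
    (fun v _ => by simp [IsStable]) fun v => by simp⟩

lemma exists_isWC_wcCost_eq_chiW (G : SimpleGraph V) (w : V → ℕ) :
    ∃ c, IsWC G w c ∧ WCcost c = chiW G w := by
  obtain ⟨c, hc⟩ := exists_isWC G w
  obtain ⟨c, hc, hcost⟩ := Nat.sInf_mem (s := {n | ∃ c, IsWC G w c ∧ n = WCcost c}) ⟨_, c, hc, rfl⟩
  exact ⟨c, hc, hcost.symm⟩

lemma chiW_induce_le {G : SimpleGraph V} {w : V → ℕ} {c : Finset V → ℕ} (hc : IsWC G w c)
    (H : Finset V) :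
    chiW (G.induce (H : Set V)) (fun v => w v.1) ≤ ∑ S with (S ∩ H).Nonempty, c S := by
  rw [Finset.sum_filter]
  refine chiW_le_of_cover (f := fun S => Finset.univ.filter fun v : (H : Set V) => v.1 ∈ S)
    (fun S hS u hu v hv huv => ?_) fun v => (hc.2 v).trans_eq ?_
  · simp only [Finset.coe_filter, Finset.mem_univ, true_and, Set.mem_ofPred_eq] at hu hv
    exact hc.1 S (by grind) u.1 hu v.1 hv huv
  · refine Finset.sum_congr rfl fun S _ => ?_
    have hv : (v.1 ∈ S) → (S ∩ H).Nonempty := fun h => ⟨v.1, Finset.mem_inter.2 ⟨h, v.2⟩⟩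
    by_cases h : v.1 ∈ S <;> simp [h, hv]

section QuotientImage

variable {U : Type*} [DecidableEq U]

def quotientImage (H S : Finset U) : Finset (Option {v : U // v ∉ H}) :=
  (if (S ∩ H).Nonempty then {none} else ∅) ∪ (S.subtype (· ∉ H)).map .some

@[simp]
lemma none_mem_quotientImage {H S : Finset U} : none ∈ quotientImage H S ↔ (S ∩ H).Nonempty := by
  unfold quotientImage
  split_ifs with h <;> simp [h]

@[simp]
lemma some_mem_quotientImage {H S : Finset U} {a : {v : U // v ∉ H}} :
    some a ∈ quotientImage H S ↔ a.1 ∈ S := by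
  unfold quotientImage
  split_ifs <;> simp

lemma IsModule.isStable_quotientImage {G : SimpleGraph U} {H S : Finset U} (hH : IsModule G H)
    (hS : IsStable G (S : Set U)) : IsStable (quotientGraph G H) (quotientImage H S : Set _) := by
  have hcontracted : ∀ a : {v : U // v ∉ H}, a.1 ∈ S → (S ∩ H).Nonempty →
      ¬ ∃ u ∈ H, G.Adj a.1 u := by
    rintro a ha ⟨u₀, hu₀⟩ ⟨u, hu, hau⟩
    rw [Finset.mem_inter] at hu₀
    rcases hH a.1 a.2 with hall | hnone
    · exact hS a.1 ha u₀ hu₀.1 (hall u₀ hu₀.2)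
    · exact hnone u hu hau
  rintro (_ | a) ha (_ | b) hb hab <;> simp only [Finset.mem_coe, none_mem_quotientImage,
    some_mem_quotientImage] at ha hb
  · exact hab
  · exact hcontracted b hb ha hab
  · exact hcontracted a ha hb hab
  · exact hS a.1 ha b.1 hb hab

end QuotientImage

/-- χ_w(F) ≤ χ_w(G) for the quotient F = f(G,H,h). -/
theorem quotient_chiW_le (G : SimpleGraph V) (w : V → ℕ) (H : Finset V)
    (hH : NontrivialModule G H) :
    chiW (quotientGraph G H) (quotientWeights G w H) ≤ chiW G w := by
  obtain ⟨c, hc, hcost⟩ := exists_isWC_wcCost_eq_chiW G w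
  refine hcost ▸ chiW_le_of_cover (f := quotientImage H) (c := c)
    (fun S hS => hH.1.isStable_quotientImage (hc.1 S hS)) ?_
  rintro (_ | a)
  · calc chiW (G.induce (H : Set V)) (fun v => w v.1)
        ≤ ∑ S with (S ∩ H).Nonempty, c S := chiW_induce_le hc H
      _ = ∑ S, if none ∈ quotientImage H S then c S else 0 := by
        simp only [none_mem_quotientImage, Finset.sum_filter]
  · simpa only [quotientWeights, some_mem_quotientImage] using hc.2 a.1
end
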